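/- arXiv:1601.02390 — 4 statements merged into one kernel-verified Lean document; each statement's English description precedes it below -/
import Mathlib

section
/- For every T > 0, the Volterra function of order −1, I(t) = ∫₀^∞ t^(σ−1)/Γ(σ) dσ, is (Lebesgue) integrable on the interval (0, T). -/
/-!
On `(0, T) × (0, ∞)` the integrand `t ^ (σ - 1) / Γ(σ)` is nonnegative, so by Tonelli it suffices
that `∫₀^∞ ∫₀^T t ^ (σ - 1) / Γ(σ) dt dσ = ∫₀^∞ T ^ σ / Γ(σ + 1) dσ` is finite. Truncating Euler's
integral for `Γ(σ + 1)` at `a` gives `Γ(σ + 1) ≥ a ^ σ e⁻ᵃ`; with `a = e T` this bounds the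
integrand by `e^(e T - σ)`.
-/

open MeasureTheory Real

/-- The Volterra function of order `-1`: `I(t) = ∫₀^∞ t^(σ-1)/Γ(σ) dσ`. -/
noncomputable def volterraI (t : ℝ) : ℝ :=
  ∫ σ in Set.Ioi (0 : ℝ), t ^ (σ - 1) / Real.Gamma σ

open Set

lemma rpow_mul_exp_neg_le_Gamma_add_one {a s : ℝ} (ha : 0 ≤ a) (hs : 0 ≤ s) :
    a ^ s * exp (-a) ≤ Gamma (s + 1) := by
  have hGamma : IntegrableOn (fun x => exp (-x) * x ^ s) (Ioi 0) := by
    simpa using GammaIntegral_convergent (s := s + 1) (by linarith)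
  have hconst : IntegrableOn (fun x => exp (-x) * a ^ s) (Ioi a) :=
    (integrableOn_exp_neg_Ioi a).mul_const _
  calc a ^ s * exp (-a) = ∫ x in Ioi a, exp (-x) * a ^ s := by
        rw [integral_mul_const, integral_exp_neg_Ioi, mul_comm]
    _ ≤ ∫ x in Ioi a, exp (-x) * x ^ s :=
        setIntegral_mono_on hconst (hGamma.mono_set (Ioi_subset_Ioi ha)) measurableSet_Ioi
          fun x hx => by gcongr; exact hx.le
    _ ≤ ∫ x in Ioi 0, exp (-x) * x ^ s := by
        refine setIntegral_mono_set hGamma ?_ (Ioi_subset_Ioi ha).eventuallyLE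
        filter_upwards [ae_restrict_mem measurableSet_Ioi] with x hx
        exact mul_nonneg (exp_pos _).le (rpow_nonneg hx.le _)
    _ = Gamma (s + 1) := by
        rw [Gamma_eq_integral (by linarith), add_sub_cancel_right]

lemma rpow_div_Gamma_add_one_le {x s : ℝ} (hx : 0 < x) (hs : 0 ≤ s) :
    x ^ s / Gamma (s + 1) ≤ exp (exp 1 * x) * exp (-s) := by
  have hlow := rpow_mul_exp_neg_le_Gamma_add_one (by positivity : 0 ≤ exp 1 * x) hs
  calc x ^ s / Gamma (s + 1) ≤ x ^ s / ((exp 1 * x) ^ s * exp (-(exp 1 * x))) := by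
        gcongr
    _ = exp (exp 1 * x) * exp (-s) := by
        rw [mul_rpow (exp_pos 1).le hx.le, exp_one_rpow, exp_neg, exp_neg]
        field_simp

lemma integrableOn_rpow_div_Gamma_add_one {x : ℝ} (hx : 0 < x) :
    IntegrableOn (fun s => x ^ s / Gamma (s + 1)) (Ioi 0) := by
  have hcont : ContinuousOn (fun s => x ^ s / Gamma (s + 1)) (Ioi 0) := by
    refine (continuous_const.rpow continuous_id fun _ => Or.inl hx.ne').continuousOn.div
      (differentiableOn_Gamma_Ioi.continuousOn.comp (continuous_add_const 1).continuousOn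
        fun _ hs => mem_Ioi.2 (add_pos hs one_pos))
      fun _ hs => (Gamma_pos_of_pos (add_pos hs one_pos)).ne'
  refine Integrable.mono' ((integrableOn_exp_neg_Ioi 0).const_mul (exp (exp 1 * x)))
    (hcont.aestronglyMeasurable measurableSet_Ioi) ?_
  filter_upwards [ae_restrict_mem measurableSet_Ioi] with s hs
  have hGamma : 0 < Gamma (s + 1) := Gamma_pos_of_pos (add_pos hs one_pos)
  rw [norm_of_nonneg (div_nonneg (rpow_nonneg hx.le _) hGamma.le)]
  exact rpow_div_Gamma_add_one_le hx hs.le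

lemma integral_Ioo_zero_rpow_sub_one {T s : ℝ} (hT : 0 ≤ T) (hs : 0 < s) :
    ∫ t in Ioo 0 T, t ^ (s - 1) = T ^ s / s := by
  rw [← integral_Ioc_eq_integral_Ioo, ← intervalIntegral.integral_of_le hT,
    integral_rpow (Or.inl (by linarith)), sub_add_cancel, zero_rpow hs.ne', sub_zero]

lemma continuousOn_rpow_sub_one_div_Gamma :
    ContinuousOn (fun p : ℝ × ℝ => p.1 ^ (p.2 - 1) / Gamma p.2) (Ioi 0 ×ˢ Ioi 0) :=
  (continuous_fst.continuousOn.rpow (continuous_snd.sub continuous_const).continuousOn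
    fun _ hp => Or.inl hp.1.ne').div
    (differentiableOn_Gamma_Ioi.continuousOn.comp continuous_snd.continuousOn fun _ hp => hp.2)
    fun _ hp => (Gamma_pos_of_pos hp.2).ne'

lemma integrable_rpow_sub_one_div_Gamma_prod {T : ℝ} (hT : 0 < T) :
    Integrable (fun p : ℝ × ℝ => p.1 ^ (p.2 - 1) / Gamma p.2)
      ((volume.restrict (Ioo 0 T)).prod (volume.restrict (Ioi 0))) := by
  have hmeas : AEStronglyMeasurable (fun p : ℝ × ℝ => p.1 ^ (p.2 - 1) / Gamma p.2)
      ((volume.restrict (Ioo 0 T)).prod (volume.restrict (Ioi 0))) := by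
    rw [Measure.prod_restrict, ← Measure.volume_eq_prod]
    exact ContinuousOn.aestronglyMeasurable
      (continuousOn_rpow_sub_one_div_Gamma.mono (prod_mono Ioo_subset_Ioi_self subset_rfl))
      (measurableSet_Ioo.prod measurableSet_Ioi)
  refine (integrable_prod_iff' hmeas).2 ⟨?_, ?_⟩
  · filter_upwards [ae_restrict_mem measurableSet_Ioi] with s (hs : 0 < s)
    exact ((intervalIntegral.integrableOn_Ioo_rpow_iff hT).2 (by linarith)).div_const _
  · refine (integrableOn_rpow_div_Gamma_add_one hT).congr_fun_ae ?_
    filter_upwards [ae_restrict_mem measurableSet_Ioi] with s (hs : 0 < s)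
    symm
    calc ∫ t in Ioo 0 T, ‖t ^ (s - 1) / Gamma s‖ = ∫ t in Ioo 0 T, t ^ (s - 1) / Gamma s :=
          setIntegral_congr_fun measurableSet_Ioo fun t ht =>
            norm_of_nonneg (div_nonneg (rpow_nonneg ht.1.le _) (Gamma_pos_of_pos hs).le)
      _ = T ^ s / Gamma (s + 1) := by
          rw [integral_div, integral_Ioo_zero_rpow_sub_one hT.le hs, Gamma_add_one hs.ne',
            div_div]

/-- For every `T > 0`, the Volterra function of order `-1` is Lebesgue integrable
on `(0, T)`. -/
theorem volterraI_integrableOn (T : ℝ) (hT : 0 < T) :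
    IntegrableOn volterraI (Set.Ioo 0 T) volume :=
  (integrable_rpow_sub_one_div_Gamma_prod hT).integral_prod_left
end

section
/- Let a > 0, s ∈ ℝ and T > s. Then: (i) for every τ ∈ (s, T], the improper integral L(τ) := lim_{ε→0⁺} ∫ₛ^{τ−ε} e^{i a²/(4(τ−σ))} / (2 i (τ−σ)) dσ exists in ℂ; (ii) there is a constant C < ∞ (depending only on a and T−s) such that |L(τ)| ≤ C for all τ ∈ (s, T]. -/
open MeasureTheory Real Filter

/-- The integral kernel of the free two-dimensional Schrödinger propagator `e^{iΔt}`
at time `t` and distance `r`: `U₀(t; r) = e^{i r²/(4t)} / (2 i t)`. -/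
noncomputable def U0 (t r : ℝ) : ℂ :=
  Complex.exp (Complex.I * r ^ 2 / (4 * t)) / (2 * Complex.I * t)

/-!
Substituting `t = τ - σ` turns the integral into `∫_ε^b U₀(t; a) dt` with `b = τ - s`.
With the unimodular phase `E(t) = e^{i a²/(4t)}` one has
`U₀(t; a) = d/dt (E(t) · 2t/a²) - (2/a²) E(t)`: integrating by parts trades the
non-integrable `1/t` singularity for the bounded terms `E(ε) · 2ε/a² → 0` and `E`.
So the integral converges as `ε → 0⁺` to `E(b) · 2b/a² - (2/a²) ∫₀^b E`,
whose modulus is at most `4b/a²`.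
-/

open scoped Topology

noncomputable def phase (a t : ℝ) : ℂ :=
  Complex.exp (Complex.I * a ^ 2 / (4 * t))

lemma norm_phase (a t : ℝ) : ‖phase a t‖ = 1 := by
  rw [phase, mul_div_assoc, mul_comm]
  exact_mod_cast Complex.norm_exp_ofReal_mul_I _

lemma measurable_phase (a : ℝ) : Measurable (phase a) := by
  unfold phase; fun_prop

lemma continuousAt_U0 (a : ℝ) {t : ℝ} (ht : t ≠ 0) : ContinuousAt (fun t => U0 t a) t := by
  unfold U0; fun_prop (disch := simpa)

lemma intervalIntegrable_phase (a u v : ℝ) : IntervalIntegrable (phase a) volume u v :=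
  (intervalIntegrable_const (c := (1 : ℂ))).mono_fun (measurable_phase a).aestronglyMeasurable
    (.of_forall fun t => by simp [norm_phase])

lemma hasDerivAt_phase (a : ℝ) {t : ℝ} (ht : t ≠ 0) :
    HasDerivAt (phase a) (-(Complex.I * a ^ 2 / (4 * t ^ 2)) * phase a t) t := by
  have htc : (t : ℂ) ≠ 0 := by exact_mod_cast ht
  have := (((hasDerivAt_inv htc).const_mul (Complex.I * a ^ 2 / 4)).comp_ofReal).cexp
  convert this using 1
  · ext x; rw [phase]; ring_nf
  · rw [phase]; ring_nf

lemma hasDerivAt_phase_mul {a t : ℝ} (ha : a ≠ 0) (ht : t ≠ 0) :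
    HasDerivAt (fun t : ℝ => phase a t * (2 * t / a ^ 2))
      (U0 t a + phase a t * (2 / a ^ 2)) t := by
  have hlin : HasDerivAt (fun t : ℝ => (2 * t / a ^ 2 : ℂ)) (2 / a ^ 2) t := by
    simpa using ((hasDerivAt_id (t : ℂ)).const_mul 2).div_const ((a : ℂ) ^ 2) |>.comp_ofReal
  refine ((hasDerivAt_phase a ht).mul hlin).congr_deriv ?_
  have htc : (t : ℂ) ≠ 0 := by exact_mod_cast ht
  have hac : (a : ℂ) ≠ 0 := by exact_mod_cast ha
  rw [U0, ← phase]
  field_simp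
  linear_combination -4 * phase a t * (a : ℂ) ^ 2 * Complex.I_sq

lemma integral_U0_eq {a ε b : ℝ} (ha : a ≠ 0) (hε : 0 < ε) (hb : 0 < b) :
    ∫ t in ε..b, U0 t a = phase a b * (2 * b / a ^ 2) - phase a ε * (2 * ε / a ^ 2)
      - 2 / a ^ 2 * ∫ t in ε..b, phase a t := by
  have hpos : ∀ t ∈ Set.uIcc ε b, t ≠ 0 := fun t ht =>
    (lt_of_lt_of_le (lt_min hε hb) ht.1).ne'
  have hU0 : IntervalIntegrable (fun t => U0 t a) volume ε b :=
    ContinuousOn.intervalIntegrable fun t ht => (continuousAt_U0 a (hpos t ht)).continuousWithinAt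
  have hphase := (intervalIntegrable_phase a ε b).mul_const (2 / (a : ℂ) ^ 2)
  have hftc := intervalIntegral.integral_eq_sub_of_hasDerivAt
    (fun t ht => hasDerivAt_phase_mul ha (hpos t ht)) (hU0.add hphase)
  rw [intervalIntegral.integral_add hU0 hphase, intervalIntegral.integral_mul_const] at hftc
  linear_combination hftc

noncomputable def improperIntegralU0 (a b : ℝ) : ℂ :=
  phase a b * (2 * b / a ^ 2) - 2 / a ^ 2 * ∫ t in (0 : ℝ)..b, phase a t

lemma tendsto_phase_mul_nhdsGT_zero (a : ℝ) :
    Tendsto (fun ε : ℝ => phase a ε * (2 * ε / a ^ 2)) (𝓝[>] 0) (𝓝 0) := by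
  rw [tendsto_zero_iff_norm_tendsto_zero]
  simp only [norm_mul, norm_phase, one_mul]
  have hcont : Continuous fun ε : ℝ => ‖(2 * ε / a ^ 2 : ℂ)‖ := by fun_prop
  convert (hcont.tendsto 0).mono_left nhdsWithin_le_nhds
  simp

lemma continuous_integral_phase_left (a b : ℝ) :
    Continuous fun ε => ∫ t in ε..b, phase a t := by
  simp_rw [intervalIntegral.integral_symm b]
  exact (intervalIntegral.continuous_primitive (intervalIntegrable_phase a) b).neg

lemma tendsto_integral_U0 {a b : ℝ} (ha : a ≠ 0) (hb : 0 < b) :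
    Tendsto (fun ε => ∫ t in ε..b, U0 t a) (𝓝[>] 0) (𝓝 (improperIntegralU0 a b)) := by
  have hlim := ((tendsto_const_nhds (x := phase a b * (2 * b / a ^ 2))).sub
    (tendsto_phase_mul_nhdsGT_zero a)).sub
    (((continuous_integral_phase_left a b).tendsto 0).mono_left nhdsWithin_le_nhds |>.const_mul
      (2 / (a : ℂ) ^ 2))
  rw [sub_zero] at hlim
  refine hlim.congr' ?_
  filter_upwards [self_mem_nhdsWithin] with ε hε
  exact (integral_U0_eq ha hε hb).symm

lemma norm_improperIntegralU0_le (a : ℝ) {b : ℝ} (hb : 0 ≤ b) :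
    ‖improperIntegralU0 a b‖ ≤ 4 * b / a ^ 2 := by
  have hint : ‖∫ t in (0 : ℝ)..b, phase a t‖ ≤ b := by
    simpa [abs_of_nonneg hb] using intervalIntegral.norm_integral_le_of_norm_le_const
      (a := 0) (b := b) fun t _ => (norm_phase a t).le
  calc ‖improperIntegralU0 a b‖
      ≤ ‖phase a b * (2 * b / a ^ 2)‖ + ‖2 / (a : ℂ) ^ 2 * ∫ t in (0 : ℝ)..b, phase a t‖ :=
        norm_sub_le _ _
    _ ≤ 2 * b / a ^ 2 + 2 / a ^ 2 * b := by
        simp only [norm_mul, norm_phase, one_mul, norm_div, norm_pow, Complex.norm_real,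
          Complex.norm_ofNat, Real.norm_eq_abs, sq_abs, abs_of_nonneg hb]
        gcongr
    _ = 4 * b / a ^ 2 := by ring

theorem improper_integral_free_kernel_exists_and_bounded_general
    (a s T : ℝ) (ha : 0 < a) :
    ∃ C : ℝ, ∀ τ ∈ Set.Ioc s T, ∃ L : ℂ,
      Tendsto (fun ε : ℝ => ∫ σ in s..(τ - ε), U0 (τ - σ) a)
        (nhdsWithin 0 (Set.Ioi 0)) (nhds L) ∧ ‖L‖ ≤ C := by
  refine ⟨4 * (T - s) / a ^ 2, fun τ hτ => ⟨improperIntegralU0 a (τ - s), ?_, ?_⟩⟩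
  · have hshift (ε : ℝ) : ∫ σ in s..(τ - ε), U0 (τ - σ) a = ∫ t in ε..(τ - s), U0 t a := by
      rw [intervalIntegral.integral_comp_sub_left (fun t => U0 t a), sub_sub_cancel]
    simpa only [hshift] using tendsto_integral_U0 ha.ne' (sub_pos.2 hτ.1)
  · refine (norm_improperIntegralU0_le a (sub_pos.2 hτ.1).le).trans ?_
    gcongr
    exact hτ.2

/-- For `a > 0`, `s ∈ ℝ`, `T > s`: (i) for each `τ ∈ (s,T]` the improper integral
`L(τ) = lim_{ε→0⁺} ∫ₛ^{τ-ε} U₀(τ-σ; a) dσ` exists; (ii) the limits are uniformly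
bounded by a constant `C < ∞`. -/
theorem improper_integral_free_kernel_exists_and_bounded
    (a s T : ℝ) (ha : 0 < a) (hT : s < T) :
    ∃ C : ℝ, ∀ τ ∈ Set.Ioc s T, ∃ L : ℂ,
      Tendsto (fun ε : ℝ => ∫ σ in s..(τ - ε), U0 (τ - σ) a)
        (nhdsWithin 0 (Set.Ioi 0)) (nhds L) ∧ ‖L‖ ≤ C :=
  improper_integral_free_kernel_exists_and_bounded_general a s T ha
end

section
/- The modified Bessel function K₀(r) := ∫₀^∞ e^{−r cosh θ} dθ satisfies K₀(r) + log(r/2) + γ → 0 as r → 0⁺, where γ is the Euler–Mascheroni constant. Equivalently, K₀(r) = −log(r/2) − γ + o(1) as r → 0⁺. -/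
open MeasureTheory Real Filter

/-- The modified Bessel function of the second kind of order `0`:
`K₀(r) = ∫₀^∞ e^{-r cosh θ} dθ`. -/
noncomputable def besselK0 (r : ℝ) : ℝ :=
  ∫ θ in Set.Ioi (0 : ℝ), Real.exp (-r * Real.cosh θ)

/-!
Since `r cosh θ = (r/2) e^θ + (r/2) e^{-θ}`, dropping the factor
`exp (-(r/2) e^{-θ}) ∈ [1 - (r/2) e^{-θ}, 1]` changes `K₀(r)` by at most `r/2`, and the
substitution `u = (r/2) e^θ` turns what is left into the exponential integral
`E₁(r/2) = ∫_{r/2}^∞ e^{-u}/u du`. Integrating by parts against `-e^{-t} log t` gives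
`∫_x^∞ log t e^{-t} dt = e^{-x} log x + E₁(x)`; as `x → 0⁺` the left side tends to
`Γ'(1) = -γ` and `(1 - e^{-x}) log x → 0`, so `E₁(x) + log x → -γ`.
-/

open Set Topology Asymptotics

theorem integral_log_mul_exp_neg_Ioi_zero :
    ∫ t in Ioi 0, log t * exp (-t) = -eulerMascheroniConstant := by
  have hΓ : HasDerivAt Complex.GammaIntegral (-eulerMascheroniConstant : ℂ) 1 := by
    refine Complex.hasDerivAt_Gamma_one.congr_of_eventuallyEq ?_
    filter_upwards [(isOpen_lt continuous_const Complex.continuous_re).mem_nhds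
      (by norm_num : (0 : ℝ) < (1 : ℂ).re)] with s hs
    exact (Complex.Gamma_eq_integral hs).symm
  have h := (Complex.hasDerivAt_GammaIntegral (by norm_num : (0 : ℝ) < (1 : ℂ).re)).unique hΓ
  simp only [sub_self, Complex.cpow_zero, one_mul, ← Complex.ofReal_mul] at h
  exact_mod_cast h

theorem intervalIntegrable_log_mul_exp_neg (a b : ℝ) :
    IntervalIntegrable (fun t => log t * exp (-t)) volume a b :=
  intervalIntegral.intervalIntegrable_log'.mul_continuousOn (by fun_prop)

theorem integrableOn_log_mul_exp_neg_Ioi_zero :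
    IntegrableOn (fun t => log t * exp (-t)) (Ioi 0) := by
  have hfar : IntegrableOn (fun t => log t * exp (-t)) (Ioi 1) := by
    refine ((GammaIntegral_convergent two_pos).mono_set (Ioi_subset_Ioi zero_le_one)).mono'
      (by fun_prop) ((ae_restrict_iff' measurableSet_Ioi).mpr (.of_forall fun t ht => ?_))
    have ht : 1 < t := ht
    rw [norm_mul, norm_of_nonneg (log_nonneg ht.le), norm_of_nonneg (exp_pos _).le, mul_comm,
      show (2 : ℝ) - 1 = 1 by norm_num, rpow_one]
    gcongr
    linarith [log_le_sub_one_of_pos (by linarith : 0 < t)]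
  rw [← Ioc_union_Ioi_eq_Ioi zero_le_one]
  exact ((intervalIntegrable_iff_integrableOn_Ioc_of_le zero_le_one).mp
    (intervalIntegrable_log_mul_exp_neg 0 1)).union hfar

theorem tendsto_integral_log_mul_exp_neg_Ioi :
    Tendsto (fun x => ∫ t in Ioi x, log t * exp (-t)) (𝓝[>] 0)
      (𝓝 (-eulerMascheroniConstant)) := by
  have hprim : Tendsto (fun x => ∫ t in (0)..x, log t * exp (-t)) (𝓝[>] 0) (𝓝 0) := by
    simpa using ((intervalIntegral.continuous_primitive intervalIntegrable_log_mul_exp_neg 0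
      ).tendsto 0).mono_left nhdsWithin_le_nhds
  rw [← integral_log_mul_exp_neg_Ioi_zero, ← sub_zero (∫ t in Ioi 0, _)]
  refine (tendsto_const_nhds.sub hprim).congr' ?_
  filter_upwards [self_mem_nhdsWithin] with x hx
  rw [← intervalIntegral.integral_Ioi_sub_Ioi integrableOn_log_mul_exp_neg_Ioi_zero hx.out.le]
  ring

theorem tendsto_exp_neg_mul_log_atTop : Tendsto (fun t => exp (-t) * log t) atTop (𝓝 0) := by
  refine ((isBigO_refl (fun t => exp (-t)) atTop).mul
    isLittleO_log_id_atTop.isBigO).trans_tendsto ?_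
  simpa [mul_comm] using tendsto_pow_mul_exp_neg_atTop_nhds_zero 1

theorem tendsto_one_sub_exp_neg_mul_log :
    Tendsto (fun x => (1 - exp (-x)) * log x) (𝓝[>] 0) (𝓝 0) := by
  have hexp : (fun x => 1 - exp (-x)) =O[𝓝[>] 0] fun x => x := by
    simpa using ((hasDerivAt_neg (0 : ℝ)).exp.isBigO_sub).neg_left.mono nhdsWithin_le_nhds
  refine (hexp.mul (isBigO_refl log (𝓝[>] 0))).trans_tendsto ?_
  simpa using (continuous_mul_log.tendsto 0).mono_left nhdsWithin_le_nhds

noncomputable def expIntegralE1 (x : ℝ) : ℝ := ∫ u in Ioi x, exp (-u) / u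

theorem integrableOn_exp_neg_div_Ioi {x : ℝ} (hx : 0 < x) :
    IntegrableOn (fun u => exp (-u) / u) (Ioi x) := by
  refine ((integrableOn_exp_neg_Ioi x).const_mul x⁻¹).mono'
    (by fun_prop : Measurable fun u => exp (-u) / u).aestronglyMeasurable
    ((ae_restrict_iff' measurableSet_Ioi).mpr (.of_forall fun u hu => ?_))
  have hu : x < u := hu
  rw [norm_div, norm_of_nonneg (exp_pos _).le, norm_of_nonneg (by linarith), div_eq_inv_mul]
  gcongr

theorem integral_log_mul_exp_neg_Ioi {x : ℝ} (hx : 0 < x) :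
    ∫ t in Ioi x, log t * exp (-t) = exp (-x) * log x + expIntegralE1 x := by
  have hlog := integrableOn_log_mul_exp_neg_Ioi_zero.mono_set (Ioi_subset_Ioi hx.le)
  have hE1 := integrableOn_exp_neg_div_Ioi hx
  have hibp : ∫ t in Ioi x, (log t * exp (-t) - exp (-t) / t) = exp (-x) * log x := by
    rw [integral_Ioi_of_hasDerivAt_of_tendsto' (f := fun t => -(exp (-t) * log t))
      (f' := fun t => log t * exp (-t) - exp (-t) / t) (m := 0) (fun t ht => ?_)
      (hlog.sub hE1) (by simpa using tendsto_exp_neg_mul_log_atTop.neg)]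
    · ring
    · have ht : 0 < t := hx.trans_le ht
      convert (((hasDerivAt_neg t).exp).fun_mul (hasDerivAt_log ht.ne')).fun_neg using 1
      ring
  rw [integral_sub hlog hE1] at hibp
  rw [expIntegralE1]
  linarith

theorem tendsto_expIntegralE1_add_log :
    Tendsto (fun x => expIntegralE1 x + log x) (𝓝[>] 0) (𝓝 (-eulerMascheroniConstant)) := by
  have h := tendsto_integral_log_mul_exp_neg_Ioi.add tendsto_one_sub_exp_neg_mul_log
  rw [add_zero] at h
  refine h.congr' ?_
  filter_upwards [self_mem_nhdsWithin] with x hx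
  rw [integral_log_mul_exp_neg_Ioi hx]
  ring

theorem integrableOn_exp_neg_mul_exp_Ioi {x : ℝ} (hx : 0 < x) :
    IntegrableOn (fun θ => exp (-(x * exp θ))) (Ioi 0) := by
  refine (exp_neg_integrableOn_Ioi 0 hx).mono' (by fun_prop) (.of_forall fun θ => ?_)
  rw [norm_of_nonneg (exp_pos _).le, neg_mul, exp_le_exp, neg_le_neg_iff]
  nlinarith [add_one_le_exp θ]

theorem integral_exp_neg_mul_exp_Ioi {x : ℝ} (hx : 0 < x) :
    ∫ θ in Ioi 0, exp (-(x * exp θ)) = expIntegralE1 x := by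
  have hexp := integral_comp_exp_Ioi (fun y => exp (-(x * y)) / y) 0
  have hmul := integral_comp_mul_left_Ioi (fun u => exp (-u) / u) 1 hx
  simp only [smul_eq_mul, exp_zero, mul_one] at hexp hmul
  calc ∫ θ in Ioi 0, exp (-(x * exp θ))
      = ∫ y in Ioi 1, exp (-(x * y)) / y := by
        rw [← hexp]
        exact setIntegral_congr_fun measurableSet_Ioi fun θ _ => by field_simp
    _ = ∫ y in Ioi 1, x * (exp (-(x * y)) / (x * y)) := by
        refine setIntegral_congr_fun measurableSet_Ioi fun y hy => ?_
        have hy : 0 < y := zero_lt_one.trans hy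
        field_simp
    _ = expIntegralE1 x := by
        rw [integral_const_mul, hmul, mul_inv_cancel_left₀ hx.ne', expIntegralE1]

theorem exp_neg_mul_exp_sub_exp_neg_mul_cosh_mem_Icc {r : ℝ} (hr : 0 ≤ r) (θ : ℝ) :
    exp (-(r / 2 * exp θ)) - exp (-r * cosh θ) ∈ Icc 0 (r / 2 * exp (-θ)) := by
  have hsplit : exp (-r * cosh θ) = exp (-(r / 2 * exp θ)) * exp (-(r / 2 * exp (-θ))) := by
    rw [← exp_add, cosh_eq]
    ring_nf
  have hA₀ := exp_pos (-(r / 2 * exp θ))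
  have hA₁ : exp (-(r / 2 * exp θ)) ≤ 1 :=
    exp_le_one_iff.mpr (by have := exp_pos θ; nlinarith)
  have hB₁ : exp (-(r / 2 * exp (-θ))) ≤ 1 :=
    exp_le_one_iff.mpr (by have := exp_pos (-θ); nlinarith)
  have hB₀ := add_one_le_exp (-(r / 2 * exp (-θ)))
  rw [hsplit]
  constructor <;> nlinarith

theorem abs_besselK0_sub_expIntegralE1_le {r : ℝ} (hr : 0 < r) :
    |besselK0 r - expIntegralE1 (r / 2)| ≤ r / 2 := by
  have hbounds := exp_neg_mul_exp_sub_exp_neg_mul_cosh_mem_Icc hr.le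
  have hE := integrableOn_exp_neg_mul_exp_Ioi (half_pos hr)
  have hK : IntegrableOn (fun θ => exp (-r * cosh θ)) (Ioi 0) :=
    hE.mono' (by fun_prop) (.of_forall fun θ => by
      rw [norm_of_nonneg (exp_pos _).le]
      linarith [(hbounds θ).1])
  have hdiff : expIntegralE1 (r / 2) - besselK0 r
      = ∫ θ in Ioi 0, (exp (-(r / 2 * exp θ)) - exp (-r * cosh θ)) := by
    rw [besselK0, ← integral_exp_neg_mul_exp_Ioi (half_pos hr), integral_sub hE hK]
  have hmajorant : ∫ θ in Ioi 0, r / 2 * exp (-θ) = r / 2 := by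
    rw [integral_const_mul, integral_exp_neg_Ioi_zero, mul_one]
  rw [abs_sub_comm, hdiff, abs_of_nonneg (integral_nonneg fun θ => (hbounds θ).1)]
  exact (setIntegral_mono (hE.sub hK) ((integrableOn_exp_neg_Ioi 0).const_mul _)
    fun θ => (hbounds θ).2).trans_eq hmajorant

/-- As `r → 0⁺`, `K₀(r) + log(r/2) + γ → 0`, i.e. `K₀(r) = -log(r/2) - γ + o(1)`. -/
theorem besselK0_asymptotics_at_zero :
    Tendsto (fun r : ℝ => besselK0 r + Real.log (r / 2) + Real.eulerMascheroniConstant)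
      (nhdsWithin 0 (Set.Ioi 0)) (nhds 0) := by
  have hhalf : Tendsto (fun r : ℝ => r / 2) (𝓝[>] 0) (𝓝 0) := by
    simpa using ((continuous_id.div_const (2 : ℝ)).tendsto 0).mono_left nhdsWithin_le_nhds
  have hhalf' : Tendsto (fun r : ℝ => r / 2) (𝓝[>] 0) (𝓝[>] 0) :=
    tendsto_nhdsWithin_of_tendsto_nhds_of_eventually_within _ hhalf
      (by filter_upwards [self_mem_nhdsWithin] with r hr using half_pos hr.out)
  have hK₀ : Tendsto (fun r => besselK0 r - expIntegralE1 (r / 2)) (𝓝[>] 0) (𝓝 0) := by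
    refine squeeze_zero_norm' ?_ hhalf
    filter_upwards [self_mem_nhdsWithin] with r hr
    exact abs_besselK0_sub_expIntegralE1_le hr
  have hE₁ := (tendsto_expIntegralE1_add_log.comp hhalf').add_const eulerMascheroniConstant
  rw [neg_add_cancel] at hE₁
  simpa only [Function.comp_apply, zero_add, ← add_assoc, sub_add_cancel] using hK₀.add hE₁
end

section
/- Let λ > 0 and s > 0. Then both improper limits below exist and lim_{R→∞} ∫_{‖p‖≤R} e^{−i ‖p‖² s} / (‖p‖² + λ) dp = π e^{i λ s} · lim_{R→∞} ∫_{λ s}^{R} e^{−i u} / u du, where the left-hand side is an integral over balls of radius R in ℝ². -/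
/-!
In polar coordinates, `p ↦ ‖p‖²` pushes Lebesgue measure on the ball of radius `R` in `ℝ²`
forward to `π` times Lebesgue measure on `[0, R²]`, and the affine substitution `u = (t + λ) s`
turns the resulting integral into `π e^{iλs} ∫_{λs}^{(R²+λ)s} e^{-iu}/u du`. The improper integral
`∫_{λs}^∞ e^{-iu}/u du` converges because integrating by parts against the bounded primitive
`i e^{-iu}` leaves an absolutely convergent integrand of size `u⁻²`.
-/

open MeasureTheory Real Filter Set Topology

section Radial

variable {E : Type*} [NormedAddCommGroup E] [NormedSpace ℝ E]

theorem integral_ball_fun_norm_eq_two_pi_smul (f : ℝ → E) {R : ℝ} (hR : 0 ≤ R) :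
    ∫ p in Metric.ball (0 : EuclideanSpace ℝ (Fin 2)) R, f ‖p‖ =
      (2 * π) • ∫ y in 0..R, y • f y := by
  have hball : ∀ p : EuclideanSpace ℝ (Fin 2),
      (Metric.ball 0 R).indicator (fun p => f ‖p‖) p = (Iio R).indicator f ‖p‖ := by
    intro p
    simp only [indicator, Metric.mem_ball, dist_zero_right, mem_Iio]
  have hvol : volume.real (Metric.ball (0 : EuclideanSpace ℝ (Fin 2)) 1) = π := by
    rw [measureReal_def, EuclideanSpace.volume_ball]
    norm_num [Real.Gamma_two, Real.sq_sqrt Real.pi_nonneg, ENNReal.toReal_ofReal Real.pi_nonneg]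
  have hradial :
      ∫ y in Ioi (0 : ℝ), y ^ (2 - 1) • (Iio R).indicator f y = ∫ y in 0..R, y • f y := by
    have hsmul : ∀ y : ℝ, y • (Iio R).indicator f y = (Iio R).indicator (fun y => y • f y) y :=
      fun y => (indicator_smul_apply _ id f y).symm
    simp only [Nat.add_one_sub_one, pow_one, hsmul]
    rw [setIntegral_indicator measurableSet_Iio, Ioi_inter_Iio,
      ← integral_Ioc_eq_integral_Ioo, ← intervalIntegral.integral_of_le hR]
  rw [← integral_indicator measurableSet_ball, funext hball,
    integral_fun_norm_addHaar volume ((Iio R).indicator f), finrank_euclideanSpace_fin, hvol,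
    hradial, two_nsmul, two_mul, add_smul]

theorem integral_smul_comp_sq (f : ℝ → E) {R : ℝ} (hR : 0 ≤ R) :
    ∫ y in 0..R, y • f (y ^ 2) = (2 : ℝ)⁻¹ • ∫ t in 0..R ^ 2, f t := by
  have hsubst := intervalIntegral.integral_deriv_smul_comp_of_deriv_nonneg
    (f := fun y : ℝ => y ^ 2) (f' := fun y => 2 * y) (g := f) (a := 0) (b := R) (by fun_prop)
    (fun y _ => by simpa using hasDerivAt_pow 2 y)
    (fun y hy => by have := hy.1; simp only [min_eq_left hR] at this; linarith)
  simp only [Function.comp_apply, mul_smul, intervalIntegral.integral_smul] at hsubst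
  rw [zero_pow two_ne_zero] at hsubst
  rw [← hsubst, smul_smul]
  norm_num

theorem integral_ball_fun_norm_sq_eq_pi_smul (f : ℝ → E) {R : ℝ} (hR : 0 ≤ R) :
    ∫ p in Metric.ball (0 : EuclideanSpace ℝ (Fin 2)) R, f (‖p‖ ^ 2) =
      π • ∫ t in 0..R ^ 2, f t := by
  rw [integral_ball_fun_norm_eq_two_pi_smul (fun y => f (y ^ 2)) hR, integral_smul_comp_sq f hR,
    smul_smul]
  ring_nf

end Radial

theorem integral_cexp_mul_div_add_eq (lam : ℝ) {s : ℝ} (hs : s ≠ 0) (T : ℝ) :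
    ∫ t in (0 : ℝ)..T, Complex.exp (-Complex.I * t * s) / ((t + lam : ℝ) : ℂ) =
      Complex.exp (Complex.I * lam * s) *
        ∫ u in (lam * s)..((T + lam) * s), Complex.exp (-Complex.I * u) / (u : ℂ) := by
  set h : ℝ → ℂ := fun u => Complex.exp (-Complex.I * u) / (u : ℂ)
  have hpoint : ∀ t : ℝ, Complex.exp (-Complex.I * t * s) / ((t + lam : ℝ) : ℂ) =
      (s * Complex.exp (Complex.I * lam * s)) * h (s * t + lam * s) := by
    intro t
    have hexp : Complex.exp (-Complex.I * t * s) = Complex.exp (Complex.I * lam * s) *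
        Complex.exp (-Complex.I * ((s * t + lam * s : ℝ) : ℂ)) := by
      rw [← Complex.exp_add]; push_cast; ring_nf
    have hden : ((s * t + lam * s : ℝ) : ℂ) = s * ((t + lam : ℝ) : ℂ) := by push_cast; ring
    have hs' : (s : ℂ) ≠ 0 := Complex.ofReal_ne_zero.2 hs
    simp only [h, hexp, hden]
    field_simp
  simp only [hpoint, intervalIntegral.integral_const_mul,
    intervalIntegral.integral_comp_mul_add (fun u => h u) hs]
  rw [mul_zero, zero_add, Complex.real_smul, ← mul_assoc, mul_comm (s : ℂ), mul_assoc _ (s : ℂ),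
    ← Complex.ofReal_mul, mul_inv_cancel₀ hs, Complex.ofReal_one, mul_one, add_mul, mul_comm s]

theorem exists_tendsto_integral_div_of_hasDerivAt_of_norm_le {g G : ℝ → ℂ} {a C : ℝ}
    (ha : 0 < a) (hG : ∀ x, HasDerivAt G (g x) x) (hg : Continuous g) (hC : ∀ x, ‖G x‖ ≤ C) :
    ∃ L, Tendsto (fun R : ℝ => ∫ u in a..R, g u / u) atTop (𝓝 L) := by
  have hGcont : Continuous G := continuous_iff_continuousAt.2 fun x => (hG x).continuousAt
  have hparts : ∀ b, a ≤ b → ∫ u in a..b, g u / u =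
      G b / b - G a / a + ∫ u in a..b, G u / (u : ℂ) ^ 2 := by
    intro b hb
    have hpos : ∀ x ∈ uIcc a b, 0 < x := fun x hx => ha.trans_le (by
      rw [uIcc_of_le hb] at hx; exact hx.1)
    have hinv : ∀ x ∈ uIcc a b, HasDerivAt (fun y : ℝ => ((y : ℂ))⁻¹) (-((x : ℂ) ^ 2)⁻¹) x :=
      fun x hx => (hasDerivAt_inv (Complex.ofReal_ne_zero.2 (hpos x hx).ne')).comp_ofReal
    have hinv' : IntervalIntegrable (fun x : ℝ => -((x : ℂ) ^ 2)⁻¹) volume a b :=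
      (ContinuousOn.neg (ContinuousOn.inv₀ (by fun_prop) fun x hx =>
        pow_ne_zero 2 (Complex.ofReal_ne_zero.2 (hpos x hx).ne'))).intervalIntegrable
    have := intervalIntegral.integral_mul_deriv_eq_deriv_mul hinv (fun x _ => hG x) hinv'
      (hg.intervalIntegrable a b)
    simp only [neg_mul, intervalIntegral.integral_neg, sub_neg_eq_add] at this
    simpa only [div_eq_inv_mul] using this
  have htail : IntegrableOn (fun u : ℝ => G u / (u : ℂ) ^ 2) (Ioi a) := by
    refine ((integrableOn_Ioi_rpow_of_lt (by norm_num : (-2 : ℝ) < -1) ha).const_mul C).mono'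
      (hGcont.measurable.div (by fun_prop)).aestronglyMeasurable ?_
    filter_upwards [ae_restrict_mem measurableSet_Ioi] with u hu
    have hu0 : 0 < u := ha.trans hu
    rw [norm_div, norm_pow, Complex.norm_real, Real.norm_of_nonneg hu0.le, Real.rpow_neg hu0.le,
      Real.rpow_two, div_eq_mul_inv]
    gcongr
    exact hC u
  have hboundary : Tendsto (fun b : ℝ => G b / b) atTop (𝓝 0) := by
    refine squeeze_zero_norm' ?_ (by simpa using tendsto_inv_atTop_zero.const_mul C)
    filter_upwards [eventually_gt_atTop 0] with b hb
    rw [norm_div, Complex.norm_real, Real.norm_of_nonneg hb.le, div_eq_mul_inv]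
    gcongr
    exact hC b
  refine ⟨-(G a / a) + ∫ u in Ioi a, G u / (u : ℂ) ^ 2, ?_⟩
  have := (hboundary.sub_const (G a / a)).add
    (intervalIntegral_tendsto_integral_Ioi a htail tendsto_id)
  rw [zero_sub] at this
  refine this.congr' ?_
  filter_upwards [eventually_ge_atTop a] with b hb
  exact (hparts b hb).symm

theorem hasDerivAt_I_mul_cexp_neg_I_mul (x : ℝ) :
    HasDerivAt (fun y : ℝ => Complex.I * Complex.exp (-Complex.I * y))
      (Complex.exp (-Complex.I * x)) x := by
  convert ((((hasDerivAt_id' (x : ℂ)).const_mul (-Complex.I)).cexp).const_mul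
    Complex.I).comp_ofReal using 1
  linear_combination Complex.exp (-Complex.I * x) * Complex.I_sq

/-- For `λ > 0` and `s > 0`, both improper limits exist and
`lim_{R→∞} ∫_{‖p‖≤R} e^{-i‖p‖²s}/(‖p‖²+λ) dp = π e^{iλs} lim_{R→∞} ∫_{λs}^R e^{-iu}/u du`. -/
theorem fresnel_green_integral_eq (lam s : ℝ) (hlam : 0 < lam) (hs : 0 < s) :
    ∃ L : ℂ,
      Tendsto (fun R : ℝ => ∫ u in (lam * s)..R, Complex.exp (-Complex.I * u) / (u : ℂ))
        atTop (nhds L) ∧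
      Tendsto
        (fun R : ℝ => ∫ p in Metric.ball (0 : EuclideanSpace ℝ (Fin 2)) R,
          Complex.exp (-Complex.I * ‖p‖ ^ 2 * s) / ((‖p‖ ^ 2 + lam : ℝ) : ℂ))
        atTop
        (nhds ((Real.pi : ℂ) * Complex.exp (Complex.I * lam * s) * L)) := by
  obtain ⟨L, hL⟩ := exists_tendsto_integral_div_of_hasDerivAt_of_norm_le (mul_pos hlam hs)
    hasDerivAt_I_mul_cexp_neg_I_mul (by fun_prop) (C := 1) fun x => by simp [Complex.norm_exp]
  refine ⟨L, hL, ?_⟩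
  have hupper : Tendsto (fun R : ℝ => (R ^ 2 + lam) * s) atTop atTop :=
    (tendsto_atTop_add_const_right _ lam (tendsto_pow_atTop two_ne_zero)).atTop_mul_const hs
  refine ((hL.comp hupper).const_mul _).congr' ?_
  filter_upwards [eventually_ge_atTop 0] with R hR
  have hball := integral_ball_fun_norm_sq_eq_pi_smul
    (fun t : ℝ => Complex.exp (-Complex.I * t * s) / ((t + lam : ℝ) : ℂ)) hR
  simp only [Complex.ofReal_pow] at hball
  rw [hball, integral_cexp_mul_div_add_eq lam hs.ne', Complex.real_smul, Function.comp_apply,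
    mul_assoc]
end
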